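/- arXiv:2512.04410 — 3 statements merged into one kernel-verified Lean document; each statement's English description precedes it below -/
import Mathlib

section
/- Let $d\ge 3$ and $c>0$. Define $\Gamma(R)=R^{3/2}$ if $d=3$, $\Gamma(R)=R(\log R)^{1/2}$ if $d=4$, and $\Gamma(R)=R$ if $d\ge 5$. There exists $C=C(d,c)$ such that for all $R\ge 2$: $\int_{\mathbb{B}_{2R}}\Big|\int_{\mathbb{B}_R}(|x+y|+1)^{2-d}(|x|+1)^{1-d}\,dx\Big|^2 dy \le C\,\Gamma(R)^2$, where $\mathbb{B}_r$ denotes the Euclidean ball of radius $r$ centered at the origin in $\mathbb{R}^d$. -/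
/-! Cauchy–Schwarz in `x` with weight `(|x|+1)^{1-d}` bounds the square of the inner integral by
`(∫_{𝔹_R} (|x|+1)^{1-d}) · ∫_{𝔹_R} (|x+y|+1)^{4-2d} (|x|+1)^{1-d} dx`. Integrating in `y` and
exchanging the integrals, each translate `x + 𝔹_{2R}` lies in `𝔹_{3R}`, so the whole expression is
at most `(∫_{𝔹_R} (|x|+1)^{1-d})² · ∫_{𝔹_{3R}} (|z|+1)^{4-2d}`. In polar coordinates these are
`≲ R` and `≲ ∫_1^{3R+1} t^{3-d} dt`, which is `≲ R`, `≲ log R`, `≲ 1` for `d = 3`, `4`, `≥ 5`. -/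

open MeasureTheory

/-- The rate function `Γ(R)`: `R^{3/2}` for `d = 3`, `R (log R)^{1/2}` for `d = 4`,
and `R` for `d ≥ 5`. -/
noncomputable def Gam (d : ℕ) (R : ℝ) : ℝ :=
  if d = 3 then R ^ ((3 : ℝ) / 2)
  else if d = 4 then R * (Real.log R) ^ ((1 : ℝ) / 2)
  else R

open Metric Set Function

section WeightedCauchySchwarz

variable {α β : Type*} [MeasurableSpace α] [MeasurableSpace β]
  {μ : Measure α} {ν : Measure β}

theorem sq_integral_mul_le_integral_mul_integral_sq_mul {f g : α → ℝ} (hg0 : 0 ≤ᵐ[μ] g)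
    (hg : Integrable g μ) (hfg : Integrable (fun x => f x * g x) μ)
    (hf2g : Integrable (fun x => f x ^ 2 * g x) μ) :
    (∫ x, f x * g x ∂μ) ^ 2 ≤ (∫ x, g x ∂μ) * ∫ x, f x ^ 2 * g x ∂μ := by
  have hquad : ∀ t : ℝ, 0 ≤ (∫ x, g x ∂μ) * (t * t) + (-2 * ∫ x, f x * g x ∂μ) * t
      + ∫ x, f x ^ 2 * g x ∂μ := by
    intro t
    calc 0 ≤ ∫ x, (f x - t) ^ 2 * g x ∂μ :=
          integral_nonneg_of_ae (hg0.mono fun x hx => mul_nonneg (sq_nonneg _) hx)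
      _ = ∫ x, ((t * t) * g x + (-2 * t) * (f x * g x) + f x ^ 2 * g x) ∂μ :=
          integral_congr_ae (ae_of_all _ fun x => by ring)
      _ = _ := by
          rw [integral_add _ hf2g, integral_add (hg.const_mul _) (hfg.const_mul _),
            integral_const_mul, integral_const_mul]
          · ring
          · exact (hg.const_mul _).add (hfg.const_mul _)
  have := discrim_le_zero hquad
  rw [discrim] at this
  nlinarith

theorem integral_sq_integral_mul_le [SFinite μ] [SFinite ν] {K : α → β → ℝ} {g : α → ℝ}
    {B : ℝ}    (hg0 : ∀ x, 0 ≤ g x) (hg : Integrable g μ)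
    (hKg : Integrable (uncurry fun x y => K x y * g x) (μ.prod ν))
    (hK2g : Integrable (uncurry fun x y => K x y ^ 2 * g x) (μ.prod ν))
    (hB : ∀ᵐ x ∂μ, ∫ y, K x y ^ 2 ∂ν ≤ B) :
    ∫ y, (∫ x, K x y * g x ∂μ) ^ 2 ∂ν ≤ (∫ x, g x ∂μ) ^ 2 * B := by
  have hpointwise : ∀ᵐ y ∂ν,
      (∫ x, K x y * g x ∂μ) ^ 2 ≤ (∫ x, g x ∂μ) * ∫ x, K x y ^ 2 * g x ∂μ := by
    filter_upwards [hKg.prod_left_ae, hK2g.prod_left_ae] with y h1 h2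
    exact sq_integral_mul_le_integral_mul_integral_sq_mul (ae_of_all _ hg0) hg h1 h2
  calc ∫ y, (∫ x, K x y * g x ∂μ) ^ 2 ∂ν
      ≤ ∫ y, (∫ x, g x ∂μ) * ∫ x, K x y ^ 2 * g x ∂μ ∂ν :=
        integral_mono_of_nonneg (ae_of_all _ fun _ => sq_nonneg _)
          (hK2g.integral_prod_right.const_mul _) hpointwise
    _ = (∫ x, g x ∂μ) * ∫ x, g x * ∫ y, K x y ^ 2 ∂ν ∂μ := by
        rw [integral_const_mul, ← integral_integral_swap hK2g]
        exact congrArg _ (integral_congr_ae (ae_of_all _ fun x =>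
          (integral_mul_const (g x) _).trans (mul_comm _ _)))
    _ ≤ (∫ x, g x ∂μ) * ∫ x, g x * B ∂μ := by
        refine mul_le_mul_of_nonneg_left (integral_mono_of_nonneg ?_ (hg.mul_const B) ?_)
          (integral_nonneg hg0)
        · exact ae_of_all _ fun x => mul_nonneg (hg0 x) (integral_nonneg fun y => sq_nonneg _)
        · filter_upwards [hB] with x hx using mul_le_mul_of_nonneg_left hx (hg0 x)
    _ = (∫ x, g x ∂μ) ^ 2 * B := by rw [integral_mul_const]; ring

end WeightedCauchySchwarz

theorem setIntegral_ball_comp_add_left_le {E : Type*} [NormedAddCommGroup E] [MeasurableSpace E]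
    [BorelSpace E] (μ : Measure E) [μ.IsAddLeftInvariant] {h : E → ℝ} (hh0 : ∀ z, 0 ≤ h z)
    {x : E} {r s : ℝ} (hx : ‖x‖ ≤ s) (hint : IntegrableOn h (ball 0 (r + s)) μ) :
    ∫ y in ball 0 r, h (x + y) ∂μ ≤ ∫ z in ball 0 (r + s), h z ∂μ := by
  have hball : ball (0 : E) r = (x + ·) ⁻¹' ball x r := by simp [preimage_add_ball]
  rw [hball, (measurePreserving_add_left μ x).setIntegral_preimage_emb
    (measurableEmbedding_addLeft x) h]
  exact setIntegral_mono_set hint (ae_of_all _ hh0)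
    (ball_subset_ball' (by rwa [dist_zero_right, add_le_add_iff_left])).eventuallyLE

theorem continuous_norm_add_one_rpow {E : Type*} [SeminormedAddCommGroup E] (p : ℝ) :
    Continuous fun z : E => (‖z‖ + 1) ^ p :=
  (continuous_norm.add continuous_const).rpow_const fun z =>
    Or.inl (show ‖z‖ + 1 ≠ 0 by positivity)

theorem integrableOn_ball_norm_add_one_rpow {E : Type*} [NormedAddCommGroup E] [ProperSpace E]
    [MeasurableSpace E] [BorelSpace E] (μ : Measure E) [IsFiniteMeasureOnCompacts μ] (p R : ℝ) :
    IntegrableOn (fun z : E => (‖z‖ + 1) ^ p) (ball 0 R) μ :=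
  ((continuous_norm_add_one_rpow p).continuousOn.integrableOn_compact
    (isCompact_closedBall 0 R)).mono_set ball_subset_closedBall

section Radial

variable {E : Type*} [NormedAddCommGroup E] [NormedSpace ℝ E] [FiniteDimensional ℝ E]
  [MeasurableSpace E] [BorelSpace E] [Nontrivial E] (μ : Measure E) [μ.IsAddHaarMeasure]

open Module

theorem setIntegral_ball_fun_norm (φ : ℝ → ℝ) (S : ℝ) :
    ∫ x in ball (0 : E) S, φ ‖x‖ ∂μ =
      finrank ℝ E * μ.real (ball 0 1) * ∫ r in Ioo 0 S, r ^ (finrank ℝ E - 1) * φ r := by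
  have hball : ball (0 : E) S = (fun x : E => ‖x‖) ⁻¹' Iio S := by
    ext x; simp
  have hcomp : ∀ x : E, ((fun x : E => ‖x‖) ⁻¹' Iio S).indicator (fun x => φ ‖x‖) x =
      (Iio S).indicator φ ‖x‖ := fun x => indicator_comp_right _
  rw [← integral_indicator measurableSet_ball, hball]
  simp only [hcomp]
  rw [integral_fun_norm_addHaar μ ((Iio S).indicator φ), nsmul_eq_mul, smul_eq_mul]
  simp only [smul_eq_mul, ← indicator_mul_right (Iio S) (fun r : ℝ => r ^ (finrank ℝ E - 1))]
  rw [setIntegral_indicator measurableSet_Iio, Ioi_inter_Iio, mul_assoc]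

theorem setIntegral_ball_norm_add_one_rpow_le (a : ℝ) {S : ℝ} (hS : 0 ≤ S) :
    ∫ x in ball (0 : E) S, (‖x‖ + 1) ^ a ∂μ ≤
      finrank ℝ E * μ.real (ball 0 1) *
        ∫ r in (0)..S, (r + 1) ^ ((finrank ℝ E : ℝ) - 1 + a) := by
  rw [setIntegral_ball_fun_norm μ (fun r => (r + 1) ^ a), intervalIntegral.integral_of_le hS,
    integral_Ioc_eq_integral_Ioo]
  refine mul_le_mul_of_nonneg_left ?_ (by positivity)
  have hcont : ∀ p : ℝ, ContinuousOn (fun r : ℝ => (r + 1) ^ p) (Icc 0 S) := fun p =>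
    (continuousOn_id.add continuousOn_const).rpow_const fun r hr =>
      Or.inl (show r + 1 ≠ 0 by linarith [hr.1])
  refine setIntegral_mono_on ?_ ?_ measurableSet_Ioo fun r hr => ?_
  · exact (((continuousOn_id.pow _).mul (hcont a)).integrableOn_Icc).mono_set Ioo_subset_Icc_self
  · exact ((hcont _).integrableOn_Icc).mono_set Ioo_subset_Icc_self
  · have hr1 : 0 < r + 1 := by linarith [hr.1]
    rw [Real.rpow_add hr1, ← Nat.cast_pred finrank_pos, Real.rpow_natCast]
    exact mul_le_mul_of_nonneg_right (pow_le_pow_left₀ hr.1.le (by linarith) _) (by positivity)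

theorem integral_ball_sq_integral_ball_norm_add_one_rpow_le (a b : ℝ) {R : ℝ} (hR : 0 ≤ R) :
    ∫ y in ball (0 : E) (2 * R),
        (∫ x in ball (0 : E) R, (‖x + y‖ + 1) ^ a * (‖x‖ + 1) ^ b ∂μ) ^ 2 ∂μ ≤
      (finrank ℝ E * μ.real (ball 0 1) *
          ∫ r in (0)..R, (r + 1) ^ ((finrank ℝ E : ℝ) - 1 + b)) ^ 2 *
        (finrank ℝ E * μ.real (ball 0 1) *
          ∫ r in (0)..3 * R, (r + 1) ^ ((finrank ℝ E : ℝ) - 1 + 2 * a)) := by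
  set κ := (finrank ℝ E : ℝ) * μ.real (ball (0 : E) 1)
  have hint : ∀ {F : E × E → ℝ}, Continuous F →
      Integrable F ((μ.restrict (ball 0 R)).prod (μ.restrict (ball 0 (2 * R)))) := by
    intro F hF
    rw [Measure.prod_restrict]
    exact (hF.continuousOn.integrableOn_compact ((isCompact_closedBall 0 R).prod
      (isCompact_closedBall 0 (2 * R)))).mono_set (prod_mono ball_subset_closedBall
        ball_subset_closedBall)
  have hK : ∀ x ∈ ball (0 : E) R, ∫ y in ball 0 (2 * R), ((‖x + y‖ + 1) ^ a) ^ 2 ∂μ ≤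
      κ * ∫ r in (0)..3 * R, (r + 1) ^ ((finrank ℝ E : ℝ) - 1 + 2 * a) := by
    intro x hx
    have hsq : ∀ z : E, ((‖z‖ + 1) ^ a) ^ 2 = (‖z‖ + 1) ^ (2 * a) := fun z => by
      rw [← Real.rpow_natCast, ← Real.rpow_mul (by positivity), mul_comm]; norm_num
    simp only [hsq]
    calc _ ≤ ∫ z in ball (0 : E) (2 * R + R), (‖z‖ + 1) ^ (2 * a) ∂μ :=
          setIntegral_ball_comp_add_left_le μ (fun z => by positivity)
            (mem_ball_zero_iff.1 hx).le (integrableOn_ball_norm_add_one_rpow μ _ _)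
      _ ≤ _ := by
          rw [show 2 * R + R = 3 * R by ring]
          exact setIntegral_ball_norm_add_one_rpow_le μ _ (by linarith)
  have hB0 : 0 ≤ κ * ∫ r in (0)..3 * R, (r + 1) ^ ((finrank ℝ E : ℝ) - 1 + 2 * a) :=
    mul_nonneg (by positivity) (intervalIntegral.integral_nonneg (by linarith) fun r hr =>
      Real.rpow_nonneg (by linarith [hr.1]) _)
  calc _ ≤ (∫ x in ball (0 : E) R, (‖x‖ + 1) ^ b ∂μ) ^ 2 *
        (κ * ∫ r in (0)..3 * R, (r + 1) ^ ((finrank ℝ E : ℝ) - 1 + 2 * a)) :=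
        integral_sq_integral_mul_le (fun x => by positivity)
          (integrableOn_ball_norm_add_one_rpow μ b R)
          (hint (((continuous_norm_add_one_rpow a).comp continuous_add).mul
            ((continuous_norm_add_one_rpow b).comp continuous_fst)))
          (hint ((((continuous_norm_add_one_rpow a).comp continuous_add).pow 2).mul
            ((continuous_norm_add_one_rpow b).comp continuous_fst)))
          ((ae_restrict_mem measurableSet_ball).mono hK)
    _ ≤ _ := mul_le_mul_of_nonneg_right (pow_le_pow_left₀
          (integral_nonneg fun x => by positivity)
          (setIntegral_ball_norm_add_one_rpow_le μ b hR) 2) hB0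

end Radial

theorem sq_mul_integral_add_one_rpow_three_sub_le {d : ℕ} (hd : 3 ≤ d) {R : ℝ}
    (hR : 2 ≤ R) :
    R ^ 2 * ∫ r in (0)..3 * R, (r + 1) ^ ((3 : ℝ) - d) ≤ 3 * Gam d R ^ 2 := by
  have hR0 : 0 < R := by linarith
  have h0 : (0 : ℝ) ∉ uIcc 1 (3 * R + 1) := by
    rw [uIcc_of_le (by linarith)]; exact fun h => by linarith [h.1]
  rw [intervalIntegral.integral_comp_add_right (fun t => t ^ ((3 : ℝ) - d)), zero_add]
  obtain rfl | rfl | hd5 : d = 3 ∨ d = 4 ∨ 5 ≤ d := by omega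
  · have hGam : Gam 3 R ^ 2 = R ^ 3 := by
      rw [Gam, if_pos rfl, ← Real.rpow_natCast, ← Real.rpow_mul hR0.le]; norm_num
    simp only [Nat.cast_ofNat, sub_self, Real.rpow_zero, intervalIntegral.integral_const,
      add_sub_cancel_right, smul_eq_mul, mul_one, hGam]
    exact (by ring : R ^ 2 * (3 * R) = 3 * R ^ 3).le
  · have hlog : 0 ≤ Real.log R := Real.log_nonneg (by linarith)
    have hGam : Gam 4 R ^ 2 = R ^ 2 * Real.log R := by
      rw [Gam, if_neg (by norm_num), if_pos rfl, mul_pow, ← Real.sqrt_eq_rpow,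
        Real.sq_sqrt hlog]
    have hcube : 3 * R + 1 ≤ R ^ 3 := by nlinarith
    have hlog3 : Real.log (3 * R + 1) ≤ 3 * Real.log R := by
      have h := Real.log_le_log (by linarith) hcube
      rwa [Real.log_pow, Nat.cast_ofNat] at h
    rw [Nat.cast_ofNat, show (3 : ℝ) - 4 = -1 by norm_num]
    simp only [Real.rpow_neg_one]
    rw [integral_inv h0, div_one, hGam]
    nlinarith
  · have hGam : Gam d R = R := by rw [Gam, if_neg (by omega), if_neg (by omega)]
    have hd5' : (5 : ℝ) ≤ d := by exact_mod_cast hd5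
    have hne : (3 : ℝ) - d ≠ -1 := by linarith
    rw [integral_rpow (Or.inr ⟨hne, h0⟩), Real.one_rpow, hGam]
    have hneg : (3 : ℝ) - d + 1 < 0 := by linarith
    have hI : ((3 * R + 1) ^ ((3 : ℝ) - d + 1) - 1) / ((3 : ℝ) - d + 1) ≤ 1 := by
      rw [div_le_iff_of_neg hneg]
      linarith [Real.rpow_nonneg (by linarith : (0 : ℝ) ≤ 3 * R + 1) ((3 : ℝ) - d + 1)]
    nlinarith

theorem stmt_6_general (d : ℕ) (hd : 3 ≤ d) :
    ∃ C : ℝ, 0 < C ∧ ∀ R : ℝ, 2 ≤ R →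
      ∫ y in Metric.ball (0 : EuclideanSpace ℝ (Fin d)) (2 * R),
          |∫ x in Metric.ball (0 : EuclideanSpace ℝ (Fin d)) R,
              (‖x + y‖ + 1) ^ ((2 : ℝ) - d) * (‖x‖ + 1) ^ ((1 : ℝ) - d)| ^ 2
        ≤ C * (Gam d R) ^ 2 := by
  have hdim : Module.finrank ℝ (EuclideanSpace ℝ (Fin d)) = d := finrank_euclideanSpace_fin
  have : Nontrivial (EuclideanSpace ℝ (Fin d)) :=
    Module.nontrivial_of_finrank_pos (by rw [hdim]; omega)
  set κ := (d : ℝ) * volume.real (ball (0 : EuclideanSpace ℝ (Fin d)) 1)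
  have hκ : 0 < κ := mul_pos (by positivity)
    (ENNReal.toReal_pos (measure_ball_pos volume 0 one_pos).ne' measure_ball_lt_top.ne)
  refine ⟨3 * κ ^ 3, by positivity, fun R hR => ?_⟩
  have key := integral_ball_sq_integral_ball_norm_add_one_rpow_le
    (volume : Measure (EuclideanSpace ℝ (Fin d))) (2 - d) (1 - d)
    (by linarith : 0 ≤ R)
  rw [hdim, show (d : ℝ) - 1 + (1 - d) = 0 by ring,
    show (d : ℝ) - 1 + 2 * (2 - d) = 3 - d by ring] at key
  simp only [Real.rpow_zero, intervalIntegral.integral_const, sub_zero, smul_eq_mul, mul_one] at key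
  simp only [sq_abs]
  calc _ ≤ (κ * R) ^ 2 * (κ * ∫ r in (0)..3 * R, (r + 1) ^ ((3 : ℝ) - d)) := key
    _ = κ ^ 3 * (R ^ 2 * ∫ r in (0)..3 * R, (r + 1) ^ ((3 : ℝ) - d)) := by ring
    _ ≤ κ ^ 3 * (3 * Gam d R ^ 2) :=
        mul_le_mul_of_nonneg_left (sq_mul_integral_add_one_rpow_three_sub_le hd hR)
          (by positivity)
    _ = 3 * κ ^ 3 * Gam d R ^ 2 := by ring

/-- `∫_{𝔹_{2R}} |∫_{𝔹_R} (|x+y|+1)^{2-d} (|x|+1)^{1-d} dx|² dy ≤ C Γ(R)²`. -/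
theorem stmt_6 (d : ℕ) (hd : 3 ≤ d) (c : ℝ) (hc : 0 < c) :
    ∃ C : ℝ, 0 < C ∧ ∀ R : ℝ, 2 ≤ R →
      ∫ y in Metric.ball (0 : EuclideanSpace ℝ (Fin d)) (2 * R),
          |∫ x in Metric.ball (0 : EuclideanSpace ℝ (Fin d)) R,
              (‖x + y‖ + 1) ^ ((2 : ℝ) - d) * (‖x‖ + 1) ^ ((1 : ℝ) - d)| ^ 2
        ≤ C * (Gam d R) ^ 2 :=
  stmt_6_general d hd
end

section
/- Let $d\ge 3$ and $c>0$. There exists $C=C(d,c)$ such that for all $R\ge 1$: $\int_{\mathbb{R}^d\setminus\mathbb{B}_{R/2}}\Big|\int_{\mathbb{R}^d\setminus\mathbb{B}_R} R^{1-d} e^{-c(|x+y|+|x|)/R}(|x+y|+1)^{2-d}\,dx\Big|^2 dy \le C R^2 \int_0^\infty e^{-2cr/R}(r+1)^{4-2d} r^{d-1}\,dr$, and the right-hand side is bounded by $C'\Gamma(R)^2$ with $\Gamma$ as defined by $\Gamma(R)=R^{3/2}$ ($d=3$), $R(\log R)^{1/2}$ ($d=4$), $R$ ($d\ge 5$). 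-/
open MeasureTheory

/-!
By the triangle inequality `‖y‖ ≤ ‖x + y‖ + ‖x‖`, half of the exponential decay of the inner
integrand can be spent on a factor `exp (-c ‖y‖ / (2R))`. The rest, translated by `y`, is a radial
function; in polar coordinates `r^{d-1} (r+1)^{2-d} ≤ r + 1`, so the inner integral is
`O(R^{3-d} exp (-c ‖y‖ / (2R)))` and the left-hand side is `O(R^{6-d})`. The radial integral on
the right is `≳ R^{4-d}`, already on `(R/2, R]`, which gives the first inequality. For the
second, `r^{d-1} (r+1)^{4-2d} ≤ (r+1)^{3-d}`, and `∫_0^∞ e^{-2cr/R} (r+1)^{3-d} dr` is `O(R)`,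
`O(log R)` or `O(1)` according as `d = 3`, `d = 4` or `d ≥ 5`; for `d = 4` split at `r = R`.
-/

open Real Set Metric Filter Topology

section OneDim

lemma pow_pred_eq_rpow_sub_one {d : ℕ} (hd : 1 ≤ d) (r : ℝ) : r ^ (d - 1) = r ^ ((d : ℝ) - 1) := by
  rw [← rpow_natCast, Nat.cast_sub hd, Nat.cast_one]

lemma integrableOn_rpow_mul_exp_neg_mul {s b : ℝ} (hs : -1 < s) (hb : 0 < b) :
    IntegrableOn (fun r : ℝ => r ^ s * exp (-b * r)) (Ioi 0) := by
  simpa using integrableOn_rpow_mul_exp_neg_mul_rpow hs one_pos hb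

lemma integral_exp_neg_mul_Ioi {a : ℝ} (ha : 0 < a) :
    ∫ r in Ioi (0 : ℝ), exp (-a * r) = 1 / a := by
  rw [integral_exp_mul_Ioi (neg_neg_iff_pos.mpr ha)]
  simp [div_neg, neg_div]

lemma integrableOn_exp_neg_mul_mul_add_one {a : ℝ} (ha : 0 < a) :
    IntegrableOn (fun r : ℝ => exp (-a * r) * (r + 1)) (Ioi 0) := by
  have h := (integrableOn_rpow_mul_exp_neg_mul (s := 1) (by norm_num) ha).add
    (exp_neg_integrableOn_Ioi 0 ha)
  refine h.congr_fun (fun r _ => ?_) measurableSet_Ioi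
  simp only [Pi.add_apply, rpow_one]
  ring

lemma integral_exp_neg_mul_mul_add_one {a : ℝ} (ha : 0 < a) :
    ∫ r in Ioi (0 : ℝ), exp (-a * r) * (r + 1) = 1 / a ^ 2 + 1 / a := by
  have hsplit : ∀ r ∈ Ioi (0 : ℝ), exp (-a * r) * (r + 1)
      = r ^ ((2 : ℝ) - 1) * exp (-(a * r)) + exp (-a * r) := by
    intro r _
    norm_num
    ring
  have hint : IntegrableOn (fun r : ℝ => r ^ ((2 : ℝ) - 1) * exp (-(a * r))) (Ioi 0) := by
    simpa using integrableOn_rpow_mul_exp_neg_mul (s := (2 : ℝ) - 1) (by norm_num) ha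
  rw [setIntegral_congr_fun measurableSet_Ioi hsplit, integral_add hint
    (exp_neg_integrableOn_Ioi 0 ha), integral_rpow_mul_exp_neg_mul_Ioi two_pos ha,
    integral_exp_neg_mul_Ioi ha]
  norm_num

lemma rpow_mul_add_one_rpow_le {r p : ℝ} (q : ℝ) (hr : 0 ≤ r) (hp : 0 ≤ p) :
    r ^ p * (r + 1) ^ q ≤ (r + 1) ^ (p + q) := by
  rw [rpow_add (by linarith)]
  gcongr
  linarith

lemma rpow_mul_exp_neg_mul_mul_add_one_rpow_le {p a r : ℝ} (hp : 1 ≤ p) (hr : 0 ≤ r) :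
    r ^ (p - 1) * (exp (-a * r) * (r + 1) ^ (2 - p)) ≤ exp (-a * r) * (r + 1) := by
  have h := rpow_mul_add_one_rpow_le (2 - p) hr (sub_nonneg.mpr hp)
  rw [show p - 1 + (2 - p) = 1 by ring, rpow_one] at h
  calc r ^ (p - 1) * (exp (-a * r) * (r + 1) ^ (2 - p))
      = exp (-a * r) * (r ^ (p - 1) * (r + 1) ^ (2 - p)) := by ring
    _ ≤ exp (-a * r) * (r + 1) := by gcongr

lemma integrableOn_exp_neg_mul_mul_add_one_rpow {a q : ℝ} (ha : 0 < a) (hq : q ≤ 0) :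
    IntegrableOn (fun r : ℝ => exp (-a * r) * (r + 1) ^ q) (Ioi 0) := by
  refine (exp_neg_integrableOn_Ioi 0 ha).mono' (by fun_prop) ?_
  filter_upwards [ae_restrict_mem measurableSet_Ioi] with r (hr : 0 < r)
  rw [norm_of_nonneg (by positivity)]
  exact mul_le_of_le_one_right (exp_pos _).le (rpow_le_one_of_one_le_of_nonpos (by linarith) hq)

lemma integral_add_one_rpow_neg_two : ∫ r in Ioi (0 : ℝ), (r + 1) ^ (-2 : ℝ) = 1 := by
  have hderiv : ∀ x ∈ Ici (0 : ℝ),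
      HasDerivAt (fun r => -(r + 1) ^ (-1 : ℝ)) ((x + 1) ^ (-2 : ℝ)) x := by
    intro x (hx : 0 ≤ x)
    have h := ((hasDerivAt_id' x).add_const 1).rpow_const (p := -1) (.inl (by linarith))
    exact h.neg.congr_deriv (by norm_num)
  have hlim : Tendsto (fun r : ℝ => -(r + 1) ^ (-1 : ℝ)) atTop (𝓝 0) := by
    simpa using ((tendsto_rpow_neg_atTop one_pos).comp
      (tendsto_atTop_add_const_right _ 1 tendsto_id)).neg
  rw [integral_Ioi_of_hasDerivAt_of_tendsto' hderiv
    (integrableOn_add_rpow_Ioi_of_lt (by norm_num) (by norm_num)) hlim]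
  norm_num

lemma integral_Ioc_add_one_inv {b : ℝ} (hb : 0 ≤ b) :
    ∫ r in Ioc 0 b, (r + 1)⁻¹ = log (b + 1) := by
  rw [← intervalIntegral.integral_of_le hb, intervalIntegral.integral_comp_add_right (·⁻¹) 1,
    integral_inv_of_pos (by norm_num) (by linarith)]
  simp

lemma integral_exp_neg_mul_mul_add_one_inv_le {a b : ℝ} (ha : 0 < a) (hb : 0 < b) :
    ∫ r in Ioi (0 : ℝ), exp (-a * r) * (r + 1)⁻¹ ≤ log (b + 1) + 1 / (a * b) := by
  have hint : IntegrableOn (fun r : ℝ => exp (-a * r) * (r + 1)⁻¹) (Ioi 0) := by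
    simpa [rpow_neg_one] using integrableOn_exp_neg_mul_mul_add_one_rpow (q := -1) ha (by norm_num)
  have hhead : ∫ r in Ioc 0 b, exp (-a * r) * (r + 1)⁻¹ ≤ log (b + 1) := by
    rw [← integral_Ioc_add_one_inv hb.le]
    refine setIntegral_mono_on (hint.mono_set Ioc_subset_Ioi_self) ?_ measurableSet_Ioc
      fun r ⟨hr, _⟩ => ?_
    · have hcont : ContinuousOn (fun r : ℝ => (r + 1)⁻¹) (Icc 0 b) :=
        (continuous_add_const 1).continuousOn.inv₀ fun r hr => (by linarith [hr.1] : 0 < r + 1).ne'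
      exact hcont.integrableOn_Icc.mono_set Ioc_subset_Icc_self
    · have : 0 < r + 1 := by linarith
      exact mul_le_of_le_one_left (by positivity) (exp_le_one_iff.mpr (by nlinarith))
  have htail : ∫ r in Ioi b, exp (-a * r) * (r + 1)⁻¹ ≤ 1 / (a * b) := by
    have hexp := exp_neg_integrableOn_Ioi 0 ha
    calc ∫ r in Ioi b, exp (-a * r) * (r + 1)⁻¹
        ≤ ∫ r in Ioi b, b⁻¹ * exp (-a * r) := by
          refine setIntegral_mono_on (hint.mono_set (Ioi_subset_Ioi hb.le))
            ((hexp.mono_set (Ioi_subset_Ioi hb.le)).const_mul _) measurableSet_Ioi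
            fun r (hr : b < r) => ?_
          rw [mul_comm]
          gcongr
          linarith
      _ ≤ ∫ r in Ioi 0, b⁻¹ * exp (-a * r) :=
          setIntegral_mono_set (hexp.const_mul _) (.of_forall fun r => by positivity)
            (Ioi_subset_Ioi hb.le).eventuallyLE
      _ = 1 / (a * b) := by
          rw [integral_const_mul, integral_exp_neg_mul_Ioi ha]
          field_simp
  rw [← Ioc_union_Ioi_eq_Ioi hb.le, setIntegral_union (Ioc_disjoint_Ioi le_rfl) measurableSet_Ioi
    (hint.mono_set Ioc_subset_Ioi_self) (hint.mono_set (Ioi_subset_Ioi hb.le))]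
  linarith

end OneDim

section ExpKernel

variable {E : Type*} [NormedAddCommGroup E] {d : ℕ} {c R : ℝ}

noncomputable def expKernel (d : ℕ) (c R : ℝ) (x y : E) : ℝ :=
  R ^ ((1 : ℝ) - d) * exp (-c * (‖x + y‖ + ‖x‖) / R) * (‖x + y‖ + 1) ^ ((2 : ℝ) - d)

lemma expKernel_nonneg (hR : 0 ≤ R) (x y : E) : 0 ≤ expKernel d c R x y := by
  unfold expKernel
  positivity

lemma expKernel_le (hc : 0 ≤ c) (hR : 0 < R) (x y : E) :
    expKernel d c R x y ≤ R ^ ((1 : ℝ) - d) * exp (-c * ‖y‖ / (2 * R))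
      * (exp (-(c / (2 * R)) * ‖x + y‖) * (‖x + y‖ + 1) ^ ((2 : ℝ) - d)) := by
  have htri : ‖y‖ ≤ ‖x + y‖ + ‖x‖ := by
    simpa using norm_sub_le (x + y) x
  have hexp : exp (-c * (‖x + y‖ + ‖x‖) / R)
      ≤ exp (-c * ‖y‖ / (2 * R)) * exp (-(c / (2 * R)) * ‖x + y‖) := by
    have key : c / (2 * R) * (‖y‖ + ‖x + y‖) ≤ c / (2 * R) * (2 * (‖x + y‖ + ‖x‖)) := by
      gcongr
      linarith [norm_nonneg x]
    rw [← exp_add, exp_le_exp]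
    calc -c * (‖x + y‖ + ‖x‖) / R = -(c / (2 * R) * (2 * (‖x + y‖ + ‖x‖))) := by
          field_simp
      _ ≤ -(c / (2 * R) * (‖y‖ + ‖x + y‖)) := neg_le_neg key
      _ = _ := by ring
  unfold expKernel
  calc _ ≤ R ^ ((1 : ℝ) - d) * (exp (-c * ‖y‖ / (2 * R)) * exp (-(c / (2 * R)) * ‖x + y‖))
        * (‖x + y‖ + 1) ^ ((2 : ℝ) - d) := by gcongr
    _ = _ := by ring

end ExpKernel

section Radial

variable {E : Type*} [NormedAddCommGroup E] [NormedSpace ℝ E] [FiniteDimensional ℝ E]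
  [MeasurableSpace E] [BorelSpace E] [Nontrivial E] (μ : Measure E) [μ.IsAddHaarMeasure]
  {d : ℕ} {c R : ℝ}

lemma integral_fun_norm_addHaar_rpow (hE : Module.finrank ℝ E = d) (f : ℝ → ℝ) :
    ∫ x, f ‖x‖ ∂μ = d * μ.real (ball 0 1) * ∫ r in Ioi 0, r ^ ((d : ℝ) - 1) * f r := by
  have hd : 1 ≤ d := hE ▸ Module.finrank_pos
  rw [integral_fun_norm_addHaar μ f, hE, nsmul_eq_mul, smul_eq_mul, mul_assoc]
  simp only [smul_eq_mul, pow_pred_eq_rpow_sub_one hd]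

lemma integrable_fun_norm_addHaar_iff_rpow (hE : Module.finrank ℝ E = d) (f : ℝ → ℝ) :
    Integrable (fun x => f ‖x‖) μ ↔ IntegrableOn (fun r => r ^ ((d : ℝ) - 1) * f r) (Ioi 0) := by
  have hd : 1 ≤ d := hE ▸ Module.finrank_pos
  rw [integrable_fun_norm_addHaar μ, hE]
  simp only [smul_eq_mul, pow_pred_eq_rpow_sub_one hd]

lemma integrable_exp_neg_mul_norm (hE : Module.finrank ℝ E = d) {b : ℝ} (hb : 0 < b) :
    Integrable (fun y => exp (-b * ‖y‖)) μ := by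
  have hd : (1 : ℝ) ≤ d := by exact_mod_cast hE ▸ Module.finrank_pos
  exact (integrable_fun_norm_addHaar_iff_rpow μ hE fun r => exp (-b * r)).mpr
    (integrableOn_rpow_mul_exp_neg_mul (by linarith) hb)

lemma integral_exp_neg_mul_norm (hE : Module.finrank ℝ E = d) {b : ℝ} (hb : 0 < b) :
    ∫ y, exp (-b * ‖y‖) ∂μ = d * μ.real (ball 0 1) * ((1 / b) ^ (d : ℝ) * Gamma d) := by
  have hd : (0 : ℝ) < d := by exact_mod_cast hE ▸ Module.finrank_pos
  rw [integral_fun_norm_addHaar_rpow μ hE fun r => exp (-b * r),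
    ← integral_rpow_mul_exp_neg_mul_Ioi hd hb]
  simp only [neg_mul]

lemma integrable_exp_neg_mul_norm_mul_rpow (hE : Module.finrank ℝ E = d) {a : ℝ} (ha : 0 < a) :
    Integrable (fun z => exp (-a * ‖z‖) * (‖z‖ + 1) ^ ((2 : ℝ) - d)) μ := by
  have hd : (1 : ℝ) ≤ d := by exact_mod_cast hE ▸ Module.finrank_pos
  refine (integrable_fun_norm_addHaar_iff_rpow μ hE
    fun r => exp (-a * r) * (r + 1) ^ ((2 : ℝ) - d)).mpr ?_
  refine (integrableOn_exp_neg_mul_mul_add_one ha).mono' (by fun_prop) ?_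
  filter_upwards [ae_restrict_mem measurableSet_Ioi] with r (hr : 0 < r)
  rw [norm_of_nonneg (by positivity)]
  exact rpow_mul_exp_neg_mul_mul_add_one_rpow_le hd hr.le

lemma integral_exp_neg_mul_norm_mul_rpow_le (hE : Module.finrank ℝ E = d) {a : ℝ} (ha : 0 < a) :
    ∫ z, exp (-a * ‖z‖) * (‖z‖ + 1) ^ ((2 : ℝ) - d) ∂μ
      ≤ d * μ.real (ball 0 1) * (1 / a ^ 2 + 1 / a) := by
  have hd : (1 : ℝ) ≤ d := by exact_mod_cast hE ▸ Module.finrank_pos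
  have hint := (integrable_fun_norm_addHaar_iff_rpow μ hE
    fun r => exp (-a * r) * (r + 1) ^ ((2 : ℝ) - d)).mp
    (integrable_exp_neg_mul_norm_mul_rpow μ hE ha)
  rw [integral_fun_norm_addHaar_rpow μ hE fun r => exp (-a * r) * (r + 1) ^ ((2 : ℝ) - d),
    ← integral_exp_neg_mul_mul_add_one ha]
  refine mul_le_mul_of_nonneg_left ?_ (by positivity)
  refine setIntegral_mono_on hint (integrableOn_exp_neg_mul_mul_add_one ha) measurableSet_Ioi ?_
  exact fun r hr => rpow_mul_exp_neg_mul_mul_add_one_rpow_le hd (le_of_lt hr)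

lemma setIntegral_expKernel_le (hE : Module.finrank ℝ E = d) (hc : 0 < c) (hR : 1 ≤ R)
    (t : Set E) (y : E) :
    ∫ x in t, expKernel d c R x y ∂μ
      ≤ d * μ.real (ball 0 1) * (4 / c ^ 2 + 2 / c) * R ^ ((3 : ℝ) - d)
        * exp (-c * ‖y‖ / (2 * R)) := by
  have hR0 : 0 < R := by linarith
  have ha : 0 < c / (2 * R) := by positivity
  set A := R ^ ((1 : ℝ) - d) * exp (-c * ‖y‖ / (2 * R))
  set h : E → ℝ := fun z => exp (-(c / (2 * R)) * ‖z‖) * (‖z‖ + 1) ^ ((2 : ℝ) - d)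
  have hA : 0 ≤ A := by positivity
  have hint : Integrable (fun x => A * h (x + y)) μ :=
    ((integrable_exp_neg_mul_norm_mul_rpow μ hE ha).comp_add_right y).const_mul A
  have hnonneg : ∀ x, 0 ≤ A * h (x + y) := fun x => by positivity
  calc ∫ x in t, expKernel d c R x y ∂μ
      ≤ ∫ x in t, A * h (x + y) ∂μ :=
        integral_mono_of_nonneg (.of_forall fun x => expKernel_nonneg hR0.le x y) hint.restrict
          (.of_forall fun x => expKernel_le hc.le hR0 x y)
    _ ≤ ∫ x, A * h (x + y) ∂μ := setIntegral_le_integral hint (.of_forall hnonneg)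
    _ = A * ∫ z, h z ∂μ := by rw [integral_const_mul, integral_add_right_eq_self h y]
    _ ≤ A * (d * μ.real (ball 0 1) * (1 / (c / (2 * R)) ^ 2 + 1 / (c / (2 * R)))) :=
        mul_le_mul_of_nonneg_left (integral_exp_neg_mul_norm_mul_rpow_le μ hE ha) hA
    _ ≤ A * (d * μ.real (ball 0 1) * ((4 / c ^ 2 + 2 / c) * R ^ 2)) := by
        gcongr
        field_simp
        nlinarith
    _ = _ := by
        have : R ^ ((1 : ℝ) - d) * R ^ 2 = R ^ ((3 : ℝ) - d) := by
          rw [← rpow_natCast, ← rpow_add hR0]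
          norm_num
          ring_nf
        rw [← this]
        ring

lemma setIntegral_sq_setIntegral_expKernel_le (hE : Module.finrank ℝ E = d) (hc : 0 < c)
    (hR : 1 ≤ R) (s t : Set E) :
    ∫ y in s, |∫ x in t, expKernel d c R x y ∂μ| ^ 2 ∂μ
      ≤ (d * μ.real (ball 0 1) * (4 / c ^ 2 + 2 / c)) ^ 2
        * (d * μ.real (ball 0 1) * ((1 / c) ^ (d : ℝ) * Gamma d)) * R ^ ((6 : ℝ) - d) := by
  have hR0 : 0 < R := by linarith
  set B := d * μ.real (ball 0 1) * (4 / c ^ 2 + 2 / c) * R ^ ((3 : ℝ) - d)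
  have hint : Integrable (fun y => B ^ 2 * exp (-(c / R) * ‖y‖)) μ :=
    (integrable_exp_neg_mul_norm μ hE (by positivity)).const_mul _
  have hpt : ∀ y, |∫ x in t, expKernel d c R x y ∂μ| ^ 2 ≤ B ^ 2 * exp (-(c / R) * ‖y‖) := by
    intro y
    have h0 : 0 ≤ ∫ x in t, expKernel d c R x y ∂μ :=
      integral_nonneg fun x => expKernel_nonneg hR0.le x y
    calc |∫ x in t, expKernel d c R x y ∂μ| ^ 2
        ≤ (B * exp (-c * ‖y‖ / (2 * R))) ^ 2 := by
          rw [abs_of_nonneg h0]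
          gcongr
          exact setIntegral_expKernel_le μ hE hc hR t y
      _ = B ^ 2 * exp (-(c / R) * ‖y‖) := by
          rw [mul_pow, ← exp_nat_mul]
          congr 2
          field_simp
          ring
  calc ∫ y in s, |∫ x in t, expKernel d c R x y ∂μ| ^ 2 ∂μ
      ≤ ∫ y in s, B ^ 2 * exp (-(c / R) * ‖y‖) ∂μ :=
        integral_mono_of_nonneg (.of_forall fun y => by positivity) hint.restrict (.of_forall hpt)
    _ ≤ ∫ y, B ^ 2 * exp (-(c / R) * ‖y‖) ∂μ :=
        setIntegral_le_integral hint (.of_forall fun y => by positivity)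
    _ = B ^ 2 * (d * μ.real (ball 0 1) * ((1 / (c / R)) ^ (d : ℝ) * Gamma d)) := by
        rw [integral_const_mul, integral_exp_neg_mul_norm μ hE (by positivity)]
    _ = _ := by
        have hpow : (R ^ ((3 : ℝ) - d)) ^ 2 * R ^ (d : ℝ) = R ^ ((6 : ℝ) - d) := by
          rw [← rpow_natCast, ← rpow_mul hR0.le, ← rpow_add hR0]
          norm_num
          ring_nf
        rw [one_div_div, div_eq_mul_one_div R c, mul_rpow hR0.le (by positivity), ← hpow]
        ring

end Radial

section RadialWeight

noncomputable def radialWeight (d : ℕ) (c R r : ℝ) : ℝ :=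
  exp (-2 * c * r / R) * (r + 1) ^ ((4 : ℝ) - 2 * d) * r ^ ((d : ℝ) - 1)

variable {d : ℕ} {c R : ℝ}

lemma radialWeight_nonneg {r : ℝ} (hr : 0 ≤ r) : 0 ≤ radialWeight d c R r := by
  unfold radialWeight
  positivity

lemma radialWeight_le (hd : 1 ≤ d) {r : ℝ} (hr : 0 ≤ r) :
    radialWeight d c R r ≤ exp (-(2 * c / R) * r) * (r + 1) ^ ((3 : ℝ) - d) := by
  have hd' : (0 : ℝ) ≤ d - 1 := by simpa using (Nat.one_le_cast.mpr hd : (1 : ℝ) ≤ d)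
  have h := rpow_mul_add_one_rpow_le ((4 : ℝ) - 2 * d) hr hd'
  rw [show (d : ℝ) - 1 + (4 - 2 * d) = 3 - d by ring] at h
  calc radialWeight d c R r
      = exp (-(2 * c / R) * r) * (r ^ ((d : ℝ) - 1) * (r + 1) ^ ((4 : ℝ) - 2 * d)) := by
        unfold radialWeight
        ring_nf
    _ ≤ _ := by gcongr

lemma radialWeight_ge (hd : 3 ≤ d) (hc : 0 ≤ c) {r : ℝ} (hr : 1 ≤ r) (hrR : r ≤ R) :
    exp (-(2 * c)) * 2 ^ ((4 : ℝ) - 2 * d) * R ^ ((3 : ℝ) - d) ≤ radialWeight d c R r := by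
  have hd' : (3 : ℝ) ≤ d := by exact_mod_cast hd
  have hr0 : 0 < r := by linarith
  have hR0 : 0 < R := by linarith
  have hexp : exp (-(2 * c)) ≤ exp (-2 * c * r / R) := by
    rw [exp_le_exp, neg_mul, neg_mul, neg_div, neg_le_neg_iff, div_le_iff₀ (by linarith)]
    nlinarith
  have hpow : R ^ ((3 : ℝ) - d) ≤ r ^ ((3 : ℝ) - d) :=
    rpow_le_rpow_of_nonpos hr0 hrR (by linarith)
  have hbase : (2 * r) ^ ((4 : ℝ) - 2 * d) ≤ (r + 1) ^ ((4 : ℝ) - 2 * d) :=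
    rpow_le_rpow_of_nonpos (by linarith) (by linarith) (by linarith)
  calc exp (-(2 * c)) * 2 ^ ((4 : ℝ) - 2 * d) * R ^ ((3 : ℝ) - d)
      ≤ exp (-2 * c * r / R) * 2 ^ ((4 : ℝ) - 2 * d) * r ^ ((3 : ℝ) - d) := by gcongr
    _ = exp (-2 * c * r / R) * (2 * r) ^ ((4 : ℝ) - 2 * d) * r ^ ((d : ℝ) - 1) := by
        have hsplit : r ^ ((3 : ℝ) - d) = r ^ ((4 : ℝ) - 2 * d) * r ^ ((d : ℝ) - 1) := by
          rw [← rpow_add hr0]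
          ring_nf
        rw [mul_rpow zero_le_two hr0.le, hsplit]
        ring
    _ ≤ radialWeight d c R r := by
        unfold radialWeight
        gcongr

lemma integrableOn_radialWeight (hd : 3 ≤ d) (hc : 0 < c) (hR : 0 < R) :
    IntegrableOn (radialWeight d c R) (Ioi 0) := by
  have hd' : (3 : ℝ) ≤ d := by exact_mod_cast hd
  refine (integrableOn_exp_neg_mul_mul_add_one_rpow (a := 2 * c / R) (q := 3 - d) (by positivity)
    (by linarith)).mono' (by unfold radialWeight; fun_prop) ?_
  filter_upwards [ae_restrict_mem measurableSet_Ioi] with r (hr : 0 < r)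
  rw [norm_of_nonneg (radialWeight_nonneg hr.le)]
  exact radialWeight_le (by omega : 1 ≤ d) hr.le

lemma integral_radialWeight_le (hd : 3 ≤ d) (hc : 0 < c) (hR : 0 < R) :
    ∫ r in Ioi 0, radialWeight d c R r
      ≤ ∫ r in Ioi 0, exp (-(2 * c / R) * r) * (r + 1) ^ ((3 : ℝ) - d) := by
  have hd' : (3 : ℝ) ≤ d := by exact_mod_cast hd
  exact setIntegral_mono_on (integrableOn_radialWeight hd hc hR)
    (integrableOn_exp_neg_mul_mul_add_one_rpow (by positivity) (by linarith)) measurableSet_Ioi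
    fun r hr => radialWeight_le (by omega) (le_of_lt hr)

lemma integral_radialWeight_ge (hd : 3 ≤ d) (hc : 0 < c) (hR : 2 ≤ R) :
    exp (-(2 * c)) * 2 ^ ((4 : ℝ) - 2 * d) / 2 * R ^ ((4 : ℝ) - d)
      ≤ ∫ r in Ioi 0, radialWeight d c R r := by
  have hR0 : 0 < R := by linarith
  have hsub : Ioc (R / 2) R ⊆ Ioi 0 := fun r hr => lt_trans (by positivity) hr.1
  calc exp (-(2 * c)) * 2 ^ ((4 : ℝ) - 2 * d) / 2 * R ^ ((4 : ℝ) - d)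
      = ∫ _ in Ioc (R / 2) R, exp (-(2 * c)) * 2 ^ ((4 : ℝ) - 2 * d) * R ^ ((3 : ℝ) - d) := by
        rw [setIntegral_const, Real.volume_real_Ioc_of_le (by linarith), smul_eq_mul,
          show (4 : ℝ) - d = 1 + (3 - d) by ring, rpow_add hR0, rpow_one]
        ring
    _ ≤ ∫ r in Ioc (R / 2) R, radialWeight d c R r :=
        setIntegral_mono_on (integrableOn_const measure_Ioc_lt_top.ne)
          ((integrableOn_radialWeight hd hc hR0).mono_set hsub) measurableSet_Ioc
          fun r hr => radialWeight_ge hd hc.le (by linarith [hr.1]) hr.2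
    _ ≤ ∫ r in Ioi 0, radialWeight d c R r :=
        setIntegral_mono_set (integrableOn_radialWeight hd hc hR0)
          ((ae_restrict_mem measurableSet_Ioi).mono fun r hr => radialWeight_nonneg (le_of_lt hr))
          hsub.eventuallyLE

lemma integral_radialWeight_three_le (hc : 0 < c) (hR : 0 < R) :
    ∫ r in Ioi 0, radialWeight 3 c R r ≤ R / (2 * c) := by
  calc ∫ r in Ioi 0, radialWeight 3 c R r
      ≤ ∫ r in Ioi 0, exp (-(2 * c / R) * r) * (r + 1) ^ ((3 : ℝ) - (3 : ℕ)) :=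
        integral_radialWeight_le le_rfl hc hR
    _ = ∫ r in Ioi 0, exp (-(2 * c / R) * r) :=
        setIntegral_congr_fun measurableSet_Ioi fun r _ => by norm_num
    _ = R / (2 * c) := by
        rw [integral_exp_neg_mul_Ioi (by positivity)]
        field_simp

lemma integral_radialWeight_four_le (hc : 0 < c) (hR : 0 < R) :
    ∫ r in Ioi 0, radialWeight 4 c R r ≤ log (R + 1) + 1 / (2 * c) := by
  calc ∫ r in Ioi 0, radialWeight 4 c R r
      ≤ ∫ r in Ioi 0, exp (-(2 * c / R) * r) * (r + 1) ^ ((3 : ℝ) - (4 : ℕ)) :=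
        integral_radialWeight_le (by norm_num) hc hR
    _ = ∫ r in Ioi 0, exp (-(2 * c / R) * r) * (r + 1)⁻¹ :=
        setIntegral_congr_fun measurableSet_Ioi fun r _ => by norm_num [rpow_neg_one]
    _ ≤ log (R + 1) + 1 / (2 * c / R * R) :=
        integral_exp_neg_mul_mul_add_one_inv_le (by positivity) hR
    _ = log (R + 1) + 1 / (2 * c) := by rw [div_mul_cancel₀ _ hR.ne']

lemma integral_radialWeight_le_one (hd : 5 ≤ d) (hc : 0 < c) (hR : 0 < R) :
    ∫ r in Ioi 0, radialWeight d c R r ≤ 1 := by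
  have hd' : (5 : ℝ) ≤ d := by exact_mod_cast hd
  refine (integral_radialWeight_le (by omega) hc hR).trans
    (le_of_le_of_eq ?_ integral_add_one_rpow_neg_two)
  refine setIntegral_mono_on (integrableOn_exp_neg_mul_mul_add_one_rpow
    (a := 2 * c / R) (q := 3 - d) (by positivity) (by linarith))
    (integrableOn_add_rpow_Ioi_of_lt (by norm_num) (by norm_num)) measurableSet_Ioi
    fun r (hr : 0 < r) => ?_
  calc exp (-(2 * c / R) * r) * (r + 1) ^ ((3 : ℝ) - d) ≤ 1 * (r + 1) ^ ((3 : ℝ) - d) := by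
        gcongr
        exact exp_le_one_iff.mpr (by rw [neg_mul]; exact neg_nonpos.mpr (by positivity))
    _ ≤ (r + 1) ^ (-2 : ℝ) := by
        rw [one_mul]
        exact rpow_le_rpow_of_exponent_le (by linarith) (by linarith)

end RadialWeight

lemma Gam_three_sq {R : ℝ} (hR : 0 ≤ R) : Gam 3 R ^ 2 = R ^ 2 * R := by
  rw [Gam, if_pos rfl, ← rpow_natCast, ← rpow_mul hR]
  norm_num
  ring

lemma Gam_four_sq {R : ℝ} (hR : 1 ≤ R) : Gam 4 R ^ 2 = R ^ 2 * log R := by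
  rw [Gam, if_neg (by norm_num), if_pos rfl, mul_pow, ← rpow_natCast (log R ^ _),
    ← rpow_mul (log_nonneg hR)]
  norm_num

lemma Gam_of_five_le {d : ℕ} (hd : 5 ≤ d) (R : ℝ) : Gam d R = R := by
  rw [Gam, if_neg (by omega), if_neg (by omega)]

lemma integral_radialWeight_four_le_mul_log {c R : ℝ} (hc : 0 < c) (hR : 2 ≤ R) :
    ∫ r in Ioi 0, radialWeight 4 c R r ≤ (2 + 1 / (2 * c * log 2)) * log R := by
  have hlog2 : 0 < log 2 := log_pos one_lt_two
  have hlogR : log 2 ≤ log R := log_le_log two_pos hR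
  have hlog1 : log (R + 1) ≤ 2 * log R := by
    rw [← log_rpow (by linarith)]
    exact log_le_log (by linarith) (by norm_num; nlinarith)
  have hconst : 1 / (2 * c) ≤ 1 / (2 * c * log 2) * log R := by
    calc 1 / (2 * c) = 1 / (2 * c * log 2) * log 2 := by field_simp
      _ ≤ 1 / (2 * c * log 2) * log R := by gcongr
  linarith [integral_radialWeight_four_le hc (by linarith : 0 < R)]

lemma exists_sq_mul_integral_radialWeight_le {d : ℕ} (hd : 3 ≤ d) {c : ℝ} (hc : 0 < c) :
    ∃ K > 0, ∀ R, 2 ≤ R → R ^ 2 * ∫ r in Ioi 0, radialWeight d c R r ≤ K * Gam d R ^ 2 := by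
  rcases (show d = 3 ∨ d = 4 ∨ 5 ≤ d by omega) with rfl | rfl | hd5
  · refine ⟨1 / (2 * c), by positivity, fun R hR => ?_⟩
    rw [Gam_three_sq (by linarith)]
    calc R ^ 2 * ∫ r in Ioi 0, radialWeight 3 c R r ≤ R ^ 2 * (R / (2 * c)) := by
          gcongr
          exact integral_radialWeight_three_le hc (by linarith)
      _ = 1 / (2 * c) * (R ^ 2 * R) := by ring
  · refine ⟨2 + 1 / (2 * c * log 2), by have := log_pos one_lt_two; positivity, fun R hR => ?_⟩
    rw [Gam_four_sq (by linarith)]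
    calc R ^ 2 * ∫ r in Ioi 0, radialWeight 4 c R r
        ≤ R ^ 2 * ((2 + 1 / (2 * c * log 2)) * log R) := by
          gcongr
          exact integral_radialWeight_four_le_mul_log hc hR
      _ = (2 + 1 / (2 * c * log 2)) * (R ^ 2 * log R) := by ring
  · refine ⟨1, one_pos, fun R hR => ?_⟩
    rw [Gam_of_five_le hd5, one_mul]
    calc R ^ 2 * ∫ r in Ioi 0, radialWeight d c R r ≤ R ^ 2 * 1 := by
          gcongr
          exact integral_radialWeight_le_one hd5 hc (by linarith)
      _ = R ^ 2 := mul_one _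

/-- `∫_{ℝ^d ∖ 𝔹_{R/2}} |∫_{ℝ^d ∖ 𝔹_R} R^{1-d} e^{-c(|x+y|+|x|)/R} (|x+y|+1)^{2-d} dx|² dy`
is bounded by `C R² ∫_0^∞ e^{-2cr/R} (r+1)^{4-2d} r^{d-1} dr`, which in turn is `≤ C' Γ(R)²`. -/
theorem stmt_8 (d : ℕ) (hd : 3 ≤ d) (c : ℝ) (hc : 0 < c) :
    ∃ C : ℝ, 0 < C ∧ ∃ C' : ℝ, 0 < C' ∧ ∀ R : ℝ, 2 ≤ R →
      (∫ y in (Metric.ball (0 : EuclideanSpace ℝ (Fin d)) (R / 2))ᶜ,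
          |∫ x in (Metric.ball (0 : EuclideanSpace ℝ (Fin d)) R)ᶜ,
              R ^ ((1 : ℝ) - d) * Real.exp (-c * (‖x + y‖ + ‖x‖) / R)
                * (‖x + y‖ + 1) ^ ((2 : ℝ) - d)| ^ 2
        ≤ C * R ^ 2 *
            ∫ r in Set.Ioi (0 : ℝ),
              Real.exp (-2 * c * r / R) * (r + 1) ^ ((4 : ℝ) - 2 * d) * r ^ ((d : ℝ) - 1)) ∧
      C * R ^ 2 *
          (∫ r in Set.Ioi (0 : ℝ),
            Real.exp (-2 * c * r / R) * (r + 1) ^ ((4 : ℝ) - 2 * d) * r ^ ((d : ℝ) - 1))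
        ≤ C' * (Gam d R) ^ 2 := by
  have : Nontrivial (EuclideanSpace ℝ (Fin d)) :=
    Module.nontrivial_of_finrank_pos (R := ℝ) (by rw [finrank_euclideanSpace_fin]; omega)
  have hV : 0 < volume.real (ball (0 : EuclideanSpace ℝ (Fin d)) 1) :=
    ENNReal.toReal_pos (measure_ball_pos _ _ one_pos).ne' measure_ball_lt_top.ne
  set V := (d : ℝ) * volume.real (ball (0 : EuclideanSpace ℝ (Fin d)) 1)
  set K := (V * (4 / c ^ 2 + 2 / c)) ^ 2 * (V * ((1 / c) ^ (d : ℝ) * Gamma d))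
  set m := exp (-(2 * c)) * 2 ^ ((4 : ℝ) - 2 * d) / 2
  have hm : 0 < m := by positivity
  have hK : 0 < K := by
    have : (0 : ℝ) < d := by exact_mod_cast (by omega : 0 < d)
    positivity
  obtain ⟨K', hK', hupper⟩ := exists_sq_mul_integral_radialWeight_le hd hc
  refine ⟨K / m, by positivity, K / m * K', by positivity, fun R hR => ⟨?_, ?_⟩⟩
  · have hR0 : 0 < R := by linarith
    calc _ ≤ K * R ^ ((6 : ℝ) - d) :=
          setIntegral_sq_setIntegral_expKernel_le volume (finrank_euclideanSpace_fin) hc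
            (by linarith) _ _
      _ = K / m * R ^ 2 * (m * R ^ ((4 : ℝ) - d)) := by
          rw [show (6 : ℝ) - d = 2 + (4 - d) by ring, rpow_add hR0, rpow_two]
          field_simp
      _ ≤ K / m * R ^ 2 * ∫ r in Ioi 0, radialWeight d c R r := by
          gcongr
          exact integral_radialWeight_ge hd hc hR
  · calc K / m * R ^ 2 * (∫ r in Ioi 0, radialWeight d c R r)
        = K / m * (R ^ 2 * ∫ r in Ioi 0, radialWeight d c R r) := by ring
      _ ≤ K / m * (K' * Gam d R ^ 2) :=
          mul_le_mul_of_nonneg_left (hupper R hR) (by positivity)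
      _ = K / m * K' * Gam d R ^ 2 := by ring
end

section
/- Let $d\ge 3$ and $c>0$. There exists $C=C(d,c)$ such that for every $R\ge 2$ and every $x\in\mathbb{Z}^d$: $\sum_{z\in\mathbb{Z}^d}(|z|\wedge R+1)^{-2}e^{-c|z|/R}(|z|+1)^{2-d} \le C\log R$. -/
/-!
The summand is radially decreasing and `‖z‖_∞ ≤ |z|`, so with `m = ‖z‖_∞` and `r = e^{-c/(2R)}` it
is at most `K r^m / (m+1)^d`: half of the exponential pays for replacing `|z| ∧ R` by `|z|` in the
first factor. Abel summation against the cube counts `#{‖z‖_∞ ≤ k} = (2k+1)^d` bounds the lattice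
sum of `r^m / (m+1)^d` by `2^d (d ∑ₖ r^k/(k+1) + ∑ₖ r^k (1-r)) = 2^d (-d log(1-r)/r + 1)`, and
`-log (1 - r) ≤ log (1 + 2R/c)`.
-/

/-- Euclidean norm of a lattice point `z ∈ ℤ^d`. -/
noncomputable def latNorm {d : ℕ} (z : Fin d → ℤ) : ℝ :=
  Real.sqrt (∑ i, ((z i : ℝ)) ^ 2)

open Real Finset Filter Topology
open scoped ENNReal

def latSupNorm {d : ℕ} (z : Fin d → ℤ) : ℕ := univ.sup fun i => (z i).natAbs

section Lattice

variable {d : ℕ}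

lemma latNorm_nonneg (z : Fin d → ℤ) : 0 ≤ latNorm z := sqrt_nonneg _

lemma latSupNorm_le_latNorm (z : Fin d → ℤ) : (latSupNorm z : ℝ) ≤ latNorm z := by
  refine sup_induction (p := fun n : ℕ => (n : ℝ) ≤ latNorm z) (by simpa using latNorm_nonneg z)
    (fun m hm n hn => by simpa using And.intro hm hn) fun i _ => ?_
  rw [Nat.cast_natAbs, Int.cast_abs]
  exact abs_le_sqrt (single_le_sum (f := fun j => ((z j : ℤ) : ℝ) ^ 2)
    (fun j _ => sq_nonneg _) (mem_univ i))

lemma latSupNorm_le_iff (z : Fin d → ℤ) (k : ℕ) :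
    latSupNorm z ≤ k ↔ z ∈ Fintype.piFinset fun _ => Icc (-(k : ℤ)) k := by
  simp only [latSupNorm, Finset.sup_le_iff, mem_univ, true_implies, Fintype.mem_piFinset, mem_Icc]
  exact forall_congr' fun i => by omega

lemma tsum_ite_latSupNorm_le (k : ℕ) (a : ℝ≥0∞) :
    ∑' z : Fin d → ℤ, (if latSupNorm z ≤ k then a else 0) = (2 * k + 1) ^ d * a := by
  rw [tsum_eq_sum (s := Fintype.piFinset fun _ => Icc (-(k : ℤ)) k)
      fun z hz => if_neg ((latSupNorm_le_iff z k).not.2 hz),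
    sum_congr rfl fun z hz => if_pos ((latSupNorm_le_iff z k).2 hz), sum_const,
    Fintype.card_piFinset, prod_const, card_univ, Fintype.card_fin, Int.card_Icc, nsmul_eq_mul]
  rw [show ((k : ℤ) + 1 - -(k : ℤ)).toNat = 2 * k + 1 by omega]
  push_cast
  rfl

end Lattice

theorem hasSum_sub_succ_of_antitone {f : ℕ → ℝ} {l : ℝ} (hf : Antitone f)
    (hl : Tendsto f atTop (𝓝 l)) : HasSum (fun n => f n - f (n + 1)) (f 0 - l) := by
  refine (hasSum_iff_tendsto_nat_of_nonneg (fun n => sub_nonneg.2 (hf n.le_succ)) _).2 ?_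
  simp only [sum_range_sub']
  exact tendsto_const_nhds.sub hl

lemma ofReal_eq_tsum_ite_sub_succ {f : ℕ → ℝ} (hf : Antitone f)
    (hl : Tendsto f atTop (𝓝 0)) (m : ℕ) :
    ENNReal.ofReal (f m) = ∑' k, if m ≤ k then ENNReal.ofReal (f k - f (k + 1)) else 0 := by
  have hshift := hasSum_sub_succ_of_antitone (f := fun j => f (j + m))
    (hf.comp_monotone fun i j h => Nat.add_le_add_right h m) ((tendsto_add_atTop_iff_nat m).2 hl)
  simp only [add_right_comm _ 1 m] at hshift
  rw [← Summable.sum_add_tsum_nat_add' (k := m) ENNReal.summable,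
    sum_eq_zero fun k hk => if_neg (by simpa using hk), zero_add]
  simp only [le_add_iff_nonneg_left, zero_le, if_true]
  rw [← ENNReal.ofReal_tsum_of_nonneg (fun j => sub_nonneg.2 (hf (by omega))) hshift.summable,
    hshift.tsum_eq, zero_add, sub_zero]

theorem tsum_ofReal_comp_latSupNorm {d : ℕ} {f : ℕ → ℝ} (hf : Antitone f)
    (hl : Tendsto f atTop (𝓝 0)) :
    ∑' z : Fin d → ℤ, ENNReal.ofReal (f (latSupNorm z))
      = ∑' k : ℕ, (2 * k + 1) ^ d * ENNReal.ofReal (f k - f (k + 1)) := by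
  simp_rw [ofReal_eq_tsum_ite_sub_succ hf hl]
  rw [ENNReal.tsum_comm]
  exact tsum_congr fun k => tsum_ite_latSupNorm_le k _

noncomputable def latMajorant (d : ℕ) (r : ℝ) (k : ℕ) : ℝ := r ^ k / ((k : ℝ) + 1) ^ d

section Majorant

variable {d : ℕ} {r : ℝ}

lemma latMajorant_nonneg (hr : 0 ≤ r) (k : ℕ) : 0 ≤ latMajorant d r k := by
  unfold latMajorant; positivity

lemma latMajorant_antitone (hr0 : 0 ≤ r) (hr1 : r ≤ 1) : Antitone (latMajorant d r) :=
  antitone_nat_of_succ_le fun k => div_le_div₀ (by positivity)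
    (pow_le_pow_of_le_one hr0 hr1 k.le_succ) (by positivity)
    (pow_le_pow_left₀ (by positivity) (by push_cast; linarith) d)

lemma tendsto_latMajorant (hr0 : 0 ≤ r) (hr1 : r < 1) :
    Tendsto (latMajorant d r) atTop (𝓝 0) :=
  squeeze_zero (latMajorant_nonneg hr0)
    (fun k => div_le_self (by positivity) (one_le_pow₀ (by linarith [k.cast_nonneg (α := ℝ)])))
    (tendsto_pow_atTop_nhds_zero_of_lt_one hr0 hr1)

lemma latMajorant_sub_succ_le (hr0 : 0 ≤ r) (hr1 : r ≤ 1) (k : ℕ) :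
    latMajorant d r k - latMajorant d r (k + 1)
      ≤ latMajorant d r k * (d / ((k : ℝ) + 2) + (1 - r)) := by
  have hk : (0 : ℝ) < k + 1 := by positivity
  set p := (((k : ℝ) + 1) / (k + 2)) ^ d
  have hsucc : latMajorant d r (k + 1) = latMajorant d r k * (p * r) := by
    simp only [latMajorant, p, div_pow]
    push_cast
    field_simp
    ring
  have hp1 : p ≤ 1 := pow_le_one₀ (by positivity) (div_le_one_of_le₀ (by linarith) (by positivity))
  have hbernoulli : 1 - p ≤ d / ((k : ℝ) + 2) := by
    have h := one_add_mul_le_pow (a := -(1 / ((k : ℝ) + 2)))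
      (by rw [neg_le_neg_iff]; exact div_le_of_le_mul₀ (by positivity) (by positivity) (by linarith)) d
    rw [show 1 + -(1 / ((k : ℝ) + 2)) = (k + 1) / (k + 2) by field_simp; ring] at h
    linarith [show (d : ℝ) * -(1 / ((k : ℝ) + 2)) = -(d / (k + 2)) by ring]
  rw [hsucc]
  nlinarith [latMajorant_nonneg (d := d) hr0 k, mul_nonneg (sub_nonneg.2 hp1) (sub_nonneg.2 hr1)]

lemma two_mul_add_one_pow_mul_latMajorant_sub_succ_le (hr0 : 0 ≤ r) (hr1 : r ≤ 1) (k : ℕ) :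
    (2 * k + 1) ^ d * (latMajorant d r k - latMajorant d r (k + 1))
      ≤ 2 ^ d * (d * (r ^ k / (k + 1)) + r ^ k * (1 - r)) := by
  have hk : (0 : ℝ) < k + 1 := by positivity
  have hcube : ((2 : ℝ) * k + 1) ^ d ≤ 2 ^ d * (k + 1) ^ d := by
    rw [← mul_pow]; exact pow_le_pow_left₀ (by positivity) (by linarith) d
  have hshell : (d : ℝ) / (k + 2) + (1 - r) ≤ d / (k + 1) + (1 - r) := by
    gcongr; linarith
  calc (2 * k + 1) ^ d * (latMajorant d r k - latMajorant d r (k + 1))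
      ≤ 2 ^ d * (k + 1) ^ d * (latMajorant d r k * (d / ((k : ℝ) + 1) + (1 - r))) := by
        refine mul_le_mul hcube ((latMajorant_sub_succ_le hr0 hr1 k).trans ?_)
          (sub_nonneg.2 (latMajorant_antitone hr0 hr1 k.le_succ)) (by positivity)
        exact mul_le_mul_of_nonneg_left hshell (latMajorant_nonneg hr0 k)
    _ = 2 ^ d * (d * (r ^ k / (k + 1)) + r ^ k * (1 - r)) := by
        unfold latMajorant; field_simp

end Majorant

theorem hasSum_pow_div_succ {r : ℝ} (hr0 : r ≠ 0) (hr1 : |r| < 1) :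
    HasSum (fun k : ℕ => r ^ k / (k + 1)) (-log (1 - r) / r) := by
  have hshift : (fun k : ℕ => r ^ k / (k + 1)) = fun k : ℕ => r ^ (k + 1) / (k + 1) / r := by
    ext k
    rw [pow_succ]
    field_simp
  rw [hshift]
  exact (hasSum_pow_div_log_of_abs_lt_one hr1).div_const r

lemma hasSum_latMajorant_bound {d : ℕ} {r : ℝ} (hr0 : 0 < r) (hr1 : r < 1) :
    HasSum (fun k : ℕ => 2 ^ d * (d * (r ^ k / (k + 1)) + r ^ k * (1 - r)))
      (2 ^ d * (d * (-log (1 - r) / r) + 1)) := by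
  have hgeom := (hasSum_geometric_of_lt_one hr0.le hr1).mul_right (1 - r)
  rw [inv_mul_cancel₀ (by linarith)] at hgeom
  exact (((hasSum_pow_div_succ hr0.ne' (abs_lt.2 ⟨by linarith, hr1⟩)).mul_left (d : ℝ)).add
    hgeom).mul_left _

theorem tsum_ofReal_latMajorant_latSupNorm_le {d : ℕ} {r : ℝ} (hr0 : 0 < r) (hr1 : r < 1) :
    ∑' z : Fin d → ℤ, ENNReal.ofReal (latMajorant d r (latSupNorm z))
      ≤ ENNReal.ofReal (2 ^ d * (d * (-log (1 - r) / r) + 1)) := by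
  have hsum := hasSum_latMajorant_bound (d := d) hr0 hr1
  rw [tsum_ofReal_comp_latSupNorm (latMajorant_antitone hr0.le hr1.le)
      (tendsto_latMajorant hr0.le hr1), ← hsum.tsum_eq,
    ENNReal.ofReal_tsum_of_nonneg (fun k => by positivity) hsum.summable]
  refine ENNReal.tsum_le_tsum fun k => ?_
  rw [show ((2 * k + 1 : ℝ≥0∞)) ^ d = ENNReal.ofReal ((2 * k + 1) ^ d) by
      exact_mod_cast (ENNReal.ofReal_natCast ((2 * k + 1) ^ d)).symm,
    ← ENNReal.ofReal_mul (by positivity)]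
  exact ENNReal.ofReal_le_ofReal
    (two_mul_add_one_pow_mul_latMajorant_sub_succ_le hr0.le hr1.le k)

theorem tsum_le_of_le_mul_latMajorant {d : ℕ} {r K : ℝ} {f : (Fin d → ℤ) → ℝ}
    (hf0 : ∀ z, 0 ≤ f z) (hK : 0 ≤ K) (hr0 : 0 < r) (hr1 : r < 1)
    (hf : ∀ z, f z ≤ K * latMajorant d r (latSupNorm z)) :
    ∑' z, f z ≤ K * (2 ^ d * (d * (-log (1 - r) / r) + 1)) := by
  have hB : 0 ≤ 2 ^ d * (d * (-log (1 - r) / r) + 1) :=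
    (hasSum_latMajorant_bound hr0 hr1).nonneg fun k => by positivity
  have hEN : ∑' z, ENNReal.ofReal (f z)
      ≤ ENNReal.ofReal (K * (2 ^ d * (d * (-log (1 - r) / r) + 1))) := calc
    ∑' z, ENNReal.ofReal (f z)
        ≤ ∑' z, ENNReal.ofReal K * ENNReal.ofReal (latMajorant d r (latSupNorm z)) :=
      ENNReal.tsum_le_tsum fun z => (ENNReal.ofReal_le_ofReal (hf z)).trans_eq
        (ENNReal.ofReal_mul hK)
    _ ≤ ENNReal.ofReal K * ENNReal.ofReal (2 ^ d * (d * (-log (1 - r) / r) + 1)) := by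
      rw [ENNReal.tsum_mul_left]
      gcongr
      exact tsum_ofReal_latMajorant_latSupNorm_le hr0 hr1
    _ = _ := (ENNReal.ofReal_mul hK).symm
  calc ∑' z, f z = (∑' z, ENNReal.ofReal (f z)).toReal := by
        rw [ENNReal.tsum_toReal_eq fun z => ENNReal.ofReal_ne_top]
        simp only [ENNReal.toReal_ofReal (hf0 _)]
    _ ≤ _ := ENNReal.toReal_le_of_le_ofReal (by positivity) hEN

noncomputable def greenTerm (d : ℕ) (c R t : ℝ) : ℝ :=
  (min t R + 1) ^ (-(2 : ℝ)) * exp (-c * t / R) * (t + 1) ^ ((2 : ℝ) - d)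

section GreenTerm

variable {d : ℕ} {c R : ℝ}

lemma greenTerm_nonneg (hR : 0 ≤ R) {t : ℝ} (ht : 0 ≤ t) : 0 ≤ greenTerm d c R t := by
  have : 0 ≤ min t R := le_min ht hR
  unfold greenTerm; positivity

lemma greenTerm_antitoneOn (hd : 2 ≤ d) (hc : 0 ≤ c) (hR : 0 ≤ R) :
    AntitoneOn (greenTerm d c R) (Set.Ici 0) := by
  intro s (hs : 0 ≤ s) t (ht : 0 ≤ t) hst
  have hmin : 0 ≤ min s R := le_min hs hR
  have hexp : (2 : ℝ) - d ≤ 0 := by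
    have : (2 : ℝ) ≤ d := by exact_mod_cast hd
    linarith
  unfold greenTerm
  gcongr ?_ * ?_ * ?_
  · exact rpow_le_rpow_of_nonpos (by positivity) (by gcongr) (by norm_num)
  · exact exp_le_exp.2 (div_le_div_of_nonneg_right (by nlinarith) hR)
  · exact rpow_le_rpow_of_nonpos (by positivity) (by linarith) hexp

lemma add_one_sq_le_mul_exp {a : ℝ} (ha : 0 < a) (hR : 0 < R) {t : ℝ} (ht : 0 ≤ t) :
    (t + 1) ^ 2 ≤ (1 + 4 / a ^ 2) * (min t R + 1) ^ 2 * exp (a * t / R) := by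
  have hexp : 1 ≤ exp (a * t / R) := one_le_exp (by positivity)
  rcases le_total t R with htR | hRt
  · rw [min_eq_left htR]
    nlinarith [show 0 ≤ 4 / a ^ 2 * (t + 1) ^ 2 by positivity, sq_nonneg (t + 1)]
  · rw [min_eq_right hRt]
    set y := a * t / (2 * R)
    have hy : y ^ 2 ≤ exp (a * t / R) := by
      have hy0 : 0 ≤ y := by positivity
      rw [show a * t / R = y + y by simp only [y]; field_simp; ring, exp_add, ← sq]
      exact pow_le_pow_left₀ hy0 ((le_add_of_nonneg_right zero_le_one).trans (add_one_le_exp y)) 2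
    have hratio : t + 1 ≤ (R + 1) * (t / R) := by
      rw [mul_div_assoc', le_div_iff₀ hR]; nlinarith
    calc (t + 1) ^ 2 ≤ ((R + 1) * (t / R)) ^ 2 := pow_le_pow_left₀ (by positivity) hratio 2
      _ = 4 / a ^ 2 * (R + 1) ^ 2 * y ^ 2 := by simp only [y]; field_simp; ring
      _ ≤ (1 + 4 / a ^ 2) * (R + 1) ^ 2 * exp (a * t / R) := by
        gcongr
        linarith

lemma greenTerm_le (hc : 0 < c) (hR : 0 < R) {t : ℝ} (ht : 0 ≤ t) :
    greenTerm d c R t ≤ (1 + 16 / c ^ 2) * (exp (-(c / 2 / R) * t) / (t + 1) ^ d) := by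
  have hm : 0 < min t R + 1 := by linarith [le_min ht hR.le]
  have ht1 : 0 < t + 1 := by linarith
  have hsq := add_one_sq_le_mul_exp (half_pos hc) hR ht
  rw [show 4 / (c / 2) ^ 2 = 16 / c ^ 2 by ring] at hsq
  have hsplit : exp (-c * t / R) = exp (-(c / 2 * t / R)) * exp (-(c / 2 / R) * t) := by
    rw [← exp_add]; congr 1; ring
  calc greenTerm d c R t
      = (t + 1) ^ 2 / (min t R + 1) ^ 2 * exp (-(c / 2 * t / R))
          * (exp (-(c / 2 / R) * t) / (t + 1) ^ d) := by
        rw [greenTerm, rpow_neg hm.le, rpow_sub ht1, rpow_two, rpow_two, rpow_natCast, hsplit]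
        ring
    _ ≤ (1 + 16 / c ^ 2) * exp (c / 2 * t / R) * exp (-(c / 2 * t / R))
          * (exp (-(c / 2 / R) * t) / (t + 1) ^ d) := by
        gcongr
        rwa [div_le_iff₀ (by positivity), mul_right_comm]
    _ = (1 + 16 / c ^ 2) * (exp (-(c / 2 / R) * t) / (t + 1) ^ d) := by
        rw [mul_assoc (1 + 16 / c ^ 2), ← exp_add, add_neg_cancel, exp_zero, mul_one]

lemma greenTerm_latNorm_le (hd : 2 ≤ d) (hc : 0 < c) (hR : 0 < R) (z : Fin d → ℤ) :
    greenTerm d c R (latNorm z)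
      ≤ (1 + 16 / c ^ 2) * latMajorant d (exp (-(c / 2 / R))) (latSupNorm z) := by
  calc greenTerm d c R (latNorm z) ≤ greenTerm d c R (latSupNorm z) :=
        greenTerm_antitoneOn hd hc.le hR.le (Set.mem_Ici.2 (Nat.cast_nonneg _))
          (Set.mem_Ici.2 (latNorm_nonneg z)) (latSupNorm_le_latNorm z)
    _ ≤ _ := by
        rw [latMajorant, ← exp_nat_mul, mul_comm (_ : ℝ) (-(c / 2 / R))]
        exact greenTerm_le hc hR (Nat.cast_nonneg _)

end GreenTerm

lemma neg_log_one_sub_exp_neg_le {x : ℝ} (hx : 0 < x) : -log (1 - exp (-x)) ≤ log (1 + 1 / x) := by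
  have hexp : exp (-x) ≤ (1 + x)⁻¹ := by
    rw [exp_neg]; exact inv_anti₀ (by positivity) (by linarith [add_one_le_exp x])
  have hgap : x / (1 + x) ≤ 1 - exp (-x) := by
    rw [show x / (1 + x) = 1 - (1 + x)⁻¹ by field_simp; ring]; linarith
  rw [← log_inv]
  refine log_le_log (inv_pos.2 ((by positivity : 0 < x / (1 + x)).trans_le hgap)) ?_
  calc (1 - exp (-x))⁻¹ ≤ (x / (1 + x))⁻¹ := inv_anti₀ (by positivity) hgap
    _ = 1 + 1 / x := by field_simp; ring

lemma neg_log_one_sub_exp_neg_div_le {a R : ℝ} (ha : 0 < a) (hR : 1 ≤ R) :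
    -log (1 - exp (-(a / R))) / exp (-(a / R)) ≤ exp a * (log R + log (1 + 1 / a)) := by
  have hR0 : 0 < R := by linarith
  have hlog : -log (1 - exp (-(a / R))) ≤ log R + log (1 + 1 / a) := by
    calc -log (1 - exp (-(a / R))) ≤ log (1 + 1 / (a / R)) :=
          neg_log_one_sub_exp_neg_le (by positivity)
      _ ≤ log (R * (1 + 1 / a)) := by
          refine log_le_log (by positivity) ?_
          rw [one_div_div, mul_add, mul_one_div]; linarith
      _ = log R + log (1 + 1 / a) := log_mul hR0.ne' (by positivity)
  have hlog_nonneg : 0 ≤ log R + log (1 + 1 / a) :=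
    add_nonneg (log_nonneg hR) (log_nonneg (le_add_of_nonneg_right (by positivity)))
  rw [div_eq_mul_inv, ← exp_neg, neg_neg, mul_comm]
  exact (mul_le_mul_of_nonneg_left hlog (exp_pos _).le).trans
    (mul_le_mul_of_nonneg_right (exp_le_exp.2 (div_le_self ha.le hR)) hlog_nonneg)

lemma le_mul_log_of_le_mul_log_add {y A B R : ℝ} (hB : 0 ≤ B) (hR : 2 ≤ R)
    (h : y ≤ A * log R + B) : y ≤ (A + B / log 2) * log R := by
  have hlog2 : 0 < log 2 := log_pos one_lt_two
  have : B ≤ B / log 2 * log R := by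
    rw [div_mul_eq_mul_div, le_div_iff₀ hlog2]
    exact mul_le_mul_of_nonneg_left (log_le_log two_pos hR) hB
  linarith

/-- For `d ≥ 3`, `c > 0`:
`∑_{z ∈ ℤ^d} (|z| ∧ R + 1)^{-2} e^{-c|z|/R} (|z|+1)^{2-d} ≤ C log R` for all `R ≥ 2`. -/
theorem stmt_13 (d : ℕ) (hd : 3 ≤ d) (c : ℝ) (hc : 0 < c) :
    ∃ C : ℝ, 0 < C ∧ ∀ R : ℝ, 2 ≤ R → ∀ x : Fin d → ℤ,
      ∑' z : Fin d → ℤ,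
          (min (latNorm z) R + 1) ^ (-(2 : ℝ)) * Real.exp (-c * latNorm z / R)
            * (latNorm z + 1) ^ ((2 : ℝ) - d)
        ≤ C * Real.log R := by
  set K := 1 + 16 / c ^ 2
  set A := K * 2 ^ d * (d * exp (c / 2))
  set B := K * 2 ^ d * (d * exp (c / 2) * log (1 + 1 / (c / 2)) + 1)
  have hB : 0 ≤ B := by
    have : 0 ≤ log (1 + 1 / (c / 2)) := log_nonneg (le_add_of_nonneg_right (by positivity))
    positivity
  refine ⟨A + B / log 2, by positivity, fun R hR _ => le_mul_log_of_le_mul_log_add hB hR ?_⟩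
  have hR0 : 0 < R := by linarith
  set r := exp (-(c / 2 / R))
  have hr1 : r < 1 := exp_lt_one_iff.2 (neg_neg_of_pos (by positivity))
  calc ∑' z : Fin d → ℤ, greenTerm d c R (latNorm z)
      ≤ K * (2 ^ d * (d * (-log (1 - r) / r) + 1)) :=
        tsum_le_of_le_mul_latMajorant (fun z => greenTerm_nonneg hR0.le (latNorm_nonneg z))
          (by positivity) (exp_pos _) hr1 (greenTerm_latNorm_le (by omega) hc hR0)
    _ ≤ K * (2 ^ d * (d * (exp (c / 2) * (log R + log (1 + 1 / (c / 2)))) + 1)) := by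
        gcongr
        exact neg_log_one_sub_exp_neg_div_le (half_pos hc) (by linarith)
    _ = A * log R + B := by ring
end
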